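/- Let G₁ and G₂ be regular finite simple graphs (G₁ is Δ₁-regular of order n₁ and size m₁, G₂ is Δ₂-regular of order n₂ and size m₂). If A(G₁;x) = A(G₂;x) as polynomials, then n₁ = n₂, m₁ = m₂, Δ₁ = Δ₂, and G₁ and G₂ have the same number of connected components. -/

import Mathlib

open Polynomial Finset

/-- Number of neighbors of `v` inside the set `S` (denoted δ_S(v)). -/
def SimpleGraph.degIn {V : Type*} [Fintype V] [DecidableEq V]
    (G : SimpleGraph V) [DecidableRel G.Adj] (S : Finset V) (v : V) : ℕ :=
  (S.filter (fun u => G.Adj v u)).card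

/-- Number of neighbors of `v` outside the set `S` (denoted δ_{S̄}(v)). -/
def SimpleGraph.degOut {V : Type*} [Fintype V] [DecidableEq V]
    (G : SimpleGraph V) [DecidableRel G.Adj] (S : Finset V) (v : V) : ℕ :=
  (Sᶜ.filter (fun u => G.Adj v u)).card

/-- `S` is an exact defensive `k`-alliance in `G`: the induced subgraph `⟨S⟩` is connected
(in particular `S` is nonempty) and `k = k_S = min_{v ∈ S} (δ_S(v) - δ_{S̄}(v))`. -/
def SimpleGraph.IsExactAlliance {V : Type*} [Fintype V] [DecidableEq V]
    (G : SimpleGraph V) [DecidableRel G.Adj] (S : Finset V) (k : ℤ) : Prop :=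
  (G.induce (S : Set V)).Connected ∧
    (∀ v ∈ S, k ≤ (G.degIn S v : ℤ) - (G.degOut S v : ℤ)) ∧
    (∃ v ∈ S, (G.degIn S v : ℤ) - (G.degOut S v : ℤ) = k)

/-- `A_k(G)`: the number of exact defensive `k`-alliances in `G`. -/
noncomputable def SimpleGraph.allianceCoeff {V : Type*} [Fintype V] [DecidableEq V]
    (G : SimpleGraph V) [DecidableRel G.Adj] (k : ℤ) : ℕ :=
  Set.ncard {S : Finset V | G.IsExactAlliance S k}

/-- The alliance polynomial `A(G;x) = Σ_{k=-Δ}^{Δ} A_k(G) x^{n+k}`, where `n` is the order and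
`Δ` the maximum degree of `G`, regarded as a real polynomial. -/
noncomputable def SimpleGraph.alliancePoly {V : Type*} [Fintype V] [DecidableEq V]
    (G : SimpleGraph V) [DecidableRel G.Adj] : Polynomial ℝ :=
  ∑ k ∈ Finset.Icc (-(G.maxDegree : ℤ)) (G.maxDegree : ℤ),
    (G.allianceCoeff k : ℝ) • X ^ (((Fintype.card V : ℤ) + k).toNat)

/-!
In a `Δ`-regular graph, `δ_S(v) - δ_{S̄}(v)` lies in `[-Δ, Δ]` for every `v ∈ S`; it equals `-Δ`
exactly when `v` has no neighbour in `S`, and `Δ` exactly when `v` has no neighbour outside `S`.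
So the exact `(-Δ)`-alliances are the singletons and the exact `Δ`-alliances are the vertex sets
of the connected components: `A(G;x)` has trailing term `n x^(n-Δ)` and leading term
`c x^(n+Δ)`, with `c` the number of components. Degree and trailing degree determine `n` and `Δ`,
the leading coefficient determines `c`, and `2m = nΔ`.
-/

namespace SimpleGraph

variable {V : Type*}

theorem exists_supp_eq_iff_connected_induce {G : SimpleGraph V} {s : Set V} :
    (∃ C : G.ConnectedComponent, C.supp = s) ↔
      (G.induce s).Connected ∧ ∀ ⦃u v⦄, u ∈ s → G.Adj u v → v ∈ s := by
  constructor
  · rintro ⟨C, rfl⟩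
    exact ⟨C.connected_toSimpleGraph, fun _ _ hu huv => C.mem_supp_of_adj_mem_supp hu huv⟩
  · rintro ⟨hconn, hclosed⟩
    have walk_closed : ∀ {a b : V} (p : G.Walk a b), a ∈ s → b ∈ s := by
      intro a b p
      induction p with
      | nil => exact id
      | cons hadj _ ih => exact fun ha => ih (hclosed ha hadj)
    obtain ⟨⟨v, hv⟩⟩ := hconn.nonempty
    refine ⟨G.connectedComponentMk v, Set.ext fun u => ⟨fun hu => ?_, fun hu => ?_⟩⟩
    · obtain ⟨p⟩ := ConnectedComponent.exact hu
      exact walk_closed p.reverse hv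
    · exact ConnectedComponent.sound <|
        hconn.preconnected ⟨u, hu⟩ ⟨v, hv⟩ |>.map <| Embedding.induce s |>.toHom

theorem eq_singleton_of_connected_induce {G : SimpleGraph V} {s : Set V}
    (hs : (G.induce s).Connected) {v : V} (hv : v ∈ s) (hisol : ∀ u ∈ s, ¬ G.Adj v u) :
    s = {v} := by
  refine Set.eq_singleton_iff_unique_mem.mpr ⟨hv, fun u hu => ?_⟩
  by_contra huv
  have : Nontrivial s := nontrivial_of_ne ⟨u, hu⟩ ⟨v, hv⟩ (by simpa using huv)
  obtain ⟨w, hw⟩ := hs.preconnected.exists_adj_of_nontrivial ⟨v, hv⟩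
  exact hisol w w.2 hw

variable [Fintype V] {G : SimpleGraph V} [DecidableRel G.Adj] {d : ℕ}

theorem IsRegularOfDegree.lt_card [Nonempty V] (hG : G.IsRegularOfDegree d) :
    d < Fintype.card V := by
  obtain ⟨v⟩ := ‹Nonempty V›
  exact hG.degree_eq v ▸ G.degree_lt_card_verts v

theorem IsRegularOfDegree.two_mul_card_edgeFinset (hG : G.IsRegularOfDegree d) :
    2 * #G.edgeFinset = Fintype.card V * d := by
  rw [← sum_degrees_eq_twice_card_edges, sum_congr rfl fun v _ => hG.degree_eq v, sum_const,
    card_univ, smul_eq_mul]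

variable [DecidableEq V]

theorem degIn_add_degOut (S : Finset V) (v : V) : G.degIn S v + G.degOut S v = G.degree v := by
  rw [degIn, degOut, ← card_union_of_disjoint (disjoint_filter_filter disjoint_compl_right),
    ← filter_union, union_compl, degree, neighborFinset_eq_filter]

theorem IsRegularOfDegree.degIn_add_degOut (hG : G.IsRegularOfDegree d)
    (S : Finset V) (v : V) : G.degIn S v + G.degOut S v = d :=
  hG.degree_eq v ▸ G.degIn_add_degOut S v

theorem degIn_eq_zero_iff {S : Finset V} {v : V} : G.degIn S v = 0 ↔ ∀ u ∈ S, ¬ G.Adj v u :=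
  card_eq_zero.trans filter_eq_empty_iff

theorem degOut_eq_zero_iff {S : Finset V} {v : V} :
    G.degOut S v = 0 ↔ ∀ u, G.Adj v u → u ∈ S := by
  simp only [degOut, card_eq_zero, filter_eq_empty_iff, mem_compl]
  exact forall_congr' fun u => by tauto

theorem IsRegularOfDegree.isExactAlliance_neg_iff (hG : G.IsRegularOfDegree d)
    {S : Finset V} : G.IsExactAlliance S (-d) ↔ ∃ v, S = {v} := by
  have key : ∀ v, (G.degIn S v : ℤ) - G.degOut S v = -d ↔ ∀ u ∈ S, ¬ G.Adj v u := fun v => by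
    rw [← degIn_eq_zero_iff]
    have := hG.degIn_add_degOut S v
    omega
  constructor
  · rintro ⟨hconn, -, v, hv, hval⟩
    exact ⟨v, coe_injective <| by
      simpa using eq_singleton_of_connected_induce hconn hv ((key v).mp hval)⟩
  · rintro ⟨v, rfl⟩
    have hval := (key v).mpr fun u hu => by simp_all
    have hconn : (G.induce (({v} : Finset V) : Set V)).Connected := by
      rw [coe_singleton, induce_singleton_eq_top]
      exact connected_top
    refine ⟨hconn, fun w hw => ?_, v, mem_singleton_self v, hval⟩
    rw [mem_singleton.mp hw, hval]

theorem IsRegularOfDegree.isExactAlliance_iff_exists_supp_eq (hG : G.IsRegularOfDegree d)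
    {S : Finset V} : G.IsExactAlliance S d ↔ ∃ C : G.ConnectedComponent, C.supp = S := by
  have key : ∀ v, (G.degIn S v : ℤ) - G.degOut S v = d ↔ ∀ u, G.Adj v u → u ∈ S := fun v => by
    rw [← degOut_eq_zero_iff]
    have := hG.degIn_add_degOut S v
    omega
  have le_deg : ∀ v, (G.degIn S v : ℤ) - G.degOut S v ≤ d := fun v => by
    have := hG.degIn_add_degOut S v
    omega
  rw [exists_supp_eq_iff_connected_induce]
  constructor
  · rintro ⟨hconn, hmin, -⟩
    exact ⟨hconn, fun v u hv => (key v).mp ((le_deg v).antisymm (hmin v hv)) u⟩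
  · rintro ⟨hconn, hclosed⟩
    obtain ⟨⟨v, hv⟩⟩ := hconn.nonempty
    exact ⟨hconn, fun w hw => ((key w).mpr fun _ => hclosed hw).ge, v, hv,
      (key v).mpr fun _ => hclosed hv⟩

theorem IsRegularOfDegree.allianceCoeff_neg_eq_card (hG : G.IsRegularOfDegree d) :
    G.allianceCoeff (-d) = Fintype.card V := by
  have : {S : Finset V | G.IsExactAlliance S (-d)} = Set.range ({·}) := by
    ext S
    simp [hG.isExactAlliance_neg_iff, eq_comm]
  rw [allianceCoeff, this, Set.ncard_range_of_injective singleton_injective,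
    Nat.card_eq_fintype_card]

theorem IsRegularOfDegree.allianceCoeff_eq_card_connectedComponent (hG : G.IsRegularOfDegree d) :
    G.allianceCoeff d = Nat.card G.ConnectedComponent := by
  have : {S : Finset V | G.IsExactAlliance S d} =
      ((↑) : Finset V → Set V) ⁻¹' Set.range (ConnectedComponent.supp (G := G)) := by
    ext S
    simp [hG.isExactAlliance_iff_exists_supp_eq]
  rw [allianceCoeff, this, Set.ncard_preimage_of_injective_subset_range coe_injective,
    Set.ncard_range_of_injective ConnectedComponent.supp_injective]
  rintro _ ⟨C, rfl⟩
  exact ⟨C.supp.toFinite.toFinset, by simp⟩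

variable [Nonempty V]

theorem coeff_alliancePoly (N : ℕ) :
    G.alliancePoly.coeff N = if |(N : ℤ) - Fintype.card V| ≤ G.maxDegree
      then (G.allianceCoeff (N - Fintype.card V) : ℝ) else 0 := by
  have hlt := G.maxDegree_lt_card_verts
  -- `hlt` keeps `n + k` positive, so `toNat` never truncates and the exponents are distinct.
  have hexp : ∀ k ∈ Icc (-(G.maxDegree : ℤ)) G.maxDegree,
      N = ((Fintype.card V : ℤ) + k).toNat ↔ k = N - Fintype.card V := fun k hk => by
    rw [mem_Icc] at hk
    omega
  simp only [alliancePoly, finsetSum_coeff, coeff_smul, coeff_X_pow, smul_eq_mul, mul_ite,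
    mul_one, mul_zero]
  rw [sum_congr rfl fun k hk => if_congr (hexp k hk) rfl rfl, sum_ite_eq']
  simp only [mem_Icc, abs_le]

theorem IsRegularOfDegree.coeff_alliancePoly_card_add (hG : G.IsRegularOfDegree d) :
    G.alliancePoly.coeff (Fintype.card V + d) = Nat.card G.ConnectedComponent := by
  simp [coeff_alliancePoly, hG.maxDegree_eq, hG.allianceCoeff_eq_card_connectedComponent]

theorem IsRegularOfDegree.coeff_alliancePoly_card_sub (hG : G.IsRegularOfDegree d) :
    G.alliancePoly.coeff (Fintype.card V - d) = Fintype.card V := by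
  have hdiff : ((Fintype.card V - d : ℕ) : ℤ) - Fintype.card V = -d := by
    have := hG.lt_card
    omega
  simp [coeff_alliancePoly, hdiff, hG.maxDegree_eq, hG.allianceCoeff_neg_eq_card]

theorem IsRegularOfDegree.natDegree_alliancePoly (hG : G.IsRegularOfDegree d) :
    G.alliancePoly.natDegree = Fintype.card V + d := by
  refine natDegree_eq_of_le_of_coeff_ne_zero
    (natDegree_le_iff_coeff_eq_zero.mpr fun N hN => ?_) ?_
  · rw [coeff_alliancePoly, if_neg (by rw [abs_le, hG.maxDegree_eq]; omega)]
  · rw [hG.coeff_alliancePoly_card_add]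
    exact_mod_cast Nat.card_pos.ne'

theorem IsRegularOfDegree.natTrailingDegree_alliancePoly (hG : G.IsRegularOfDegree d) :
    G.alliancePoly.natTrailingDegree = Fintype.card V - d := by
  have hne : G.alliancePoly.coeff (Fintype.card V - d) ≠ 0 := by
    rw [hG.coeff_alliancePoly_card_sub]
    exact_mod_cast Fintype.card_ne_zero
  refine (natTrailingDegree_le_of_ne_zero hne).antisymm
    (le_natTrailingDegree (fun h0 => hne (by rw [h0, coeff_zero])) fun N hN => ?_)
  rw [coeff_alliancePoly, if_neg (by rw [abs_le, hG.maxDegree_eq]; omega)]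

theorem IsRegularOfDegree.leadingCoeff_alliancePoly (hG : G.IsRegularOfDegree d) :
    G.alliancePoly.leadingCoeff = Nat.card G.ConnectedComponent := by
  rw [leadingCoeff, hG.natDegree_alliancePoly, hG.coeff_alliancePoly_card_add]

end SimpleGraph

/-- Regular graphs with equal alliance polynomials have the same order, size,
degree and number of connected components. -/
theorem regular_alliancePoly_eq_imp
    {V₁ V₂ : Type*} [Fintype V₁] [DecidableEq V₁] [Nonempty V₁]
    [Fintype V₂] [DecidableEq V₂] [Nonempty V₂]
    (G₁ : SimpleGraph V₁) [DecidableRel G₁.Adj]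
    (G₂ : SimpleGraph V₂) [DecidableRel G₂.Adj]
    (Δ₁ Δ₂ : ℕ) (h₁ : G₁.IsRegularOfDegree Δ₁) (h₂ : G₂.IsRegularOfDegree Δ₂)
    (h : G₁.alliancePoly = G₂.alliancePoly) :
    Fintype.card V₁ = Fintype.card V₂ ∧
    G₁.edgeFinset.card = G₂.edgeFinset.card ∧
    Δ₁ = Δ₂ ∧
    Nat.card G₁.ConnectedComponent = Nat.card G₂.ConnectedComponent := by
  have hlt₁ := h₁.lt_card
  have hlt₂ := h₂.lt_card
  have hsum : Fintype.card V₁ + Δ₁ = Fintype.card V₂ + Δ₂ := by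
    rw [← h₁.natDegree_alliancePoly, ← h₂.natDegree_alliancePoly, h]
  have hdiff : Fintype.card V₁ - Δ₁ = Fintype.card V₂ - Δ₂ := by
    rw [← h₁.natTrailingDegree_alliancePoly,
      ← h₂.natTrailingDegree_alliancePoly, h]
  have hcard : Fintype.card V₁ = Fintype.card V₂ := by omega
  have hdeg : Δ₁ = Δ₂ := by omega
  refine ⟨hcard, ?_, hdeg, ?_⟩
  · have hedges₁ := h₁.two_mul_card_edgeFinset
    have hedges₂ := h₂.two_mul_card_edgeFinset
    rw [hcard, hdeg] at hedges₁
    omega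
  · have hlead := h₁.leadingCoeff_alliancePoly
    rw [h, h₂.leadingCoeff_alliancePoly] at hlead
    exact_mod_cast hlead.symm
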